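/- arXiv:2101.06662 — 4 statements merged into one kernel-verified Lean document; each statement's English description precedes it below -/
import Mathlib

section
/- Let 𝔹 be a B-score for the observed outcome (i.e., a Bt-score with 𝔹 = 𝔹_0 = 𝔹_1). Then for each t ∈ {0,1}, μ_t(x) = E[𝔽_t(𝔹) | X = x] for P∘X⁻¹-a.e. x, where 𝔽_t is the measurable function from the B-score definition; in particular the mixing distribution (the conditional law of 𝔹 given X = x) is the same for t = 0 and t = 1, and only the integrand 𝔽_t depends on t. -/
open MeasureTheory ProbabilityTheory

section Tower

variable {Ω β γ E : Type*} {mΩ : MeasurableSpace Ω} [MeasurableSpace β]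
  [mγ : MeasurableSpace γ] [NormedAddCommGroup E] [NormedSpace ℝ E] [CompleteSpace E]

theorem MeasurableSpace.comap_le_comap_prodMk (B : Ω → β) (X : Ω → γ) :
    mγ.comap X ≤ MeasurableSpace.comap (fun ω => (B ω, X ω)) inferInstance :=
  Measurable.comap_le (f := X) (measurable_snd.comp (comap_measurable _))

theorem condExp_comap_ae_eq_of_condExp_comap_prodMk_ae_eq {μ : Measure Ω} [IsFiniteMeasure μ]
    {B : Ω → β} {X : Ω → γ} (hB : Measurable B) (hX : Measurable X) {f g : Ω → E}
    (h : μ[f | MeasurableSpace.comap (fun ω => (B ω, X ω)) inferInstance] =ᵐ[μ] g) :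
    μ[f | mγ.comap X] =ᵐ[μ] μ[g | mγ.comap X] :=
  calc μ[f | mγ.comap X]
      =ᵐ[μ] μ[μ[f | MeasurableSpace.comap (fun ω => (B ω, X ω)) inferInstance] | mγ.comap X] :=
        (condExp_condExp_of_le (MeasurableSpace.comap_le_comap_prodMk B X)
          (hB.prodMk hX).comap_le).symm
    _ =ᵐ[μ] μ[g | mγ.comap X] := condExp_congr_ae h

end Tower

theorem cate_by_b_score_general
    {Ω : Type*} [MeasurableSpace Ω] (μ : Measure Ω) [IsProbabilityMeasure μ]
    {m d n : ℕ}
    (X : Ω → Fin m → ℝ) (hX : Measurable X)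
    (Y : Bool → Ω → Fin d → ℝ)
    (B : Ω → Fin n → ℝ) (hB : Measurable B)
    (F : Bool → (Fin n → ℝ) → Fin d → ℝ)
    -- B-score, first condition: `E[Y(t) | σ(B, X)] = F t (B)` a.s.
    (hscore₁ : ∀ t, μ[Y t | MeasurableSpace.comap (fun ω => (B ω, X ω)) inferInstance]
        =ᵐ[μ] fun ω => F t (B ω)) :
    -- conclusion: `μ_t(x) = E[F t (B) | X = x]` for a.e. `x`
    ∀ t, μ[Y t | MeasurableSpace.comap X inferInstance]
      =ᵐ[μ] μ[(fun ω => F t (B ω)) | MeasurableSpace.comap X inferInstance] :=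
  fun t => condExp_comap_ae_eq_of_condExp_comap_prodMk_ae_eq hB hX (hscore₁ t)

/-- **CATE by B-score.** If `B` is a B-score (a Bt-score with `B = B 0 = B 1`) for the
observed outcome `ω ↦ Y (T ω) ω` with outcome-mean functions `F t`, then for each
`t ∈ {0,1}`, `μ_t(x) = E[F t (B) | X = x]` for a.e. `x`: the mixing distribution (the
conditional law of `B` given `X = x`) is the same for `t = 0` and `t = 1`, and only the
integrand `F t` depends on `t`. -/
theorem cate_by_b_score
    {Ω : Type*} [MeasurableSpace Ω] (μ : Measure Ω) [IsProbabilityMeasure μ]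
    {m d n : ℕ}
    (X : Ω → Fin m → ℝ) (hX : Measurable X)
    (T : Ω → Bool) (hT : Measurable T)
    (Y : Bool → Ω → Fin d → ℝ) (hY : ∀ t, Measurable (Y t))
    (hYint : ∀ t, Integrable (Y t) μ)
    (B : Ω → Fin n → ℝ) (hB : Measurable B)
    (F : Bool → (Fin n → ℝ) → Fin d → ℝ) (hF : ∀ t, Measurable (F t))
    (hFint : ∀ t, Integrable (fun ω => F t (B ω)) μ)
    -- B-score, first condition: `E[Y(t) | σ(B, X)] = F t (B)` a.s.
    (hscore₁ : ∀ t, μ[Y t | MeasurableSpace.comap (fun ω => (B ω, X ω)) inferInstance]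
        =ᵐ[μ] fun ω => F t (B ω))
    -- B-score, second condition: `E[Y | σ(B)] = F t (B)` a.s. on `{T = t}`,
    -- where `Y = Y(T)` is the observed outcome (consistency).
    (hscore₂ : ∀ t, ∀ᵐ ω ∂μ, T ω = t →
        (μ[(fun ω => Y (T ω) ω) | MeasurableSpace.comap B inferInstance]) ω = F t (B ω)) :
    -- conclusion: `μ_t(x) = E[F t (B) | X = x]` for a.e. `x`
    ∀ t, μ[Y t | MeasurableSpace.comap X inferInstance]
      =ᵐ[μ] μ[(fun ω => F t (B ω)) | MeasurableSpace.comap X inferInstance] :=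
  cate_by_b_score_general μ X hX Y B hB F hscore₁
end

section
/- Let V be a random variable satisfying weak ignorability, i.e., Y(t) is conditionally independent of T given V, and let ℙ_t = ℙ_t(V) be a measurable function of V such that Y(t) is conditionally independent of V given ℙ_t(V) (a Pt-score). Then Y(t) is conditionally independent of the pair (V, T) given ℙ_t(V). -/
/-!
For sub-σ-algebras `m' ≤ m`, an event `A` is conditionally independent of `m` given `m'` exactly
when `P[A | m] = P[A | m']`. The score property is this for `σ(P t (V)) ≤ σ(V)`, and
exchangeability `Y t ⟂ T | V` upgrades to `Y t ⟂ (V, T) | V`, i.e. `P[A | σ(V, T)] = P[A | σ(V)]`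
for events `A` of `Y t`. Chaining the two equalities gives `P[A | σ(V, T)] = P[A | σ(P t (V))]`:
this is the contraction property of conditional independence.
-/

open MeasureTheory ProbabilityTheory MeasurableSpace Set

lemma isPiSystem_image2_inter {α : Type*} {s t : Set (Set α)} (hs : IsPiSystem s)
    (ht : IsPiSystem t) : IsPiSystem (image2 (· ∩ ·) s t) := by
  rintro _ ⟨a, ha, b, hb, rfl⟩ _ ⟨a', ha', b', hb', rfl⟩ hne
  rw [inter_inter_inter_comm] at hne ⊢
  exact mem_image2_of_mem (hs a ha a' ha' (hne.mono inter_subset_left))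
    (ht b hb b' hb' (hne.mono inter_subset_right))

lemma MeasurableSpace.sup_eq_generateFrom_image2_inter {α : Type*} (m₁ m₂ : MeasurableSpace α) :
    m₁ ⊔ m₂ = generateFrom
      (image2 (· ∩ ·) {s | MeasurableSet[m₁] s} {t | MeasurableSet[m₂] t}) := by
  refine le_antisymm (sup_le ?_ ?_) (generateFrom_le ?_)
  · intro s hs
    exact measurableSet_generateFrom ⟨s, hs, univ, MeasurableSet.univ, inter_univ s⟩
  · intro t ht
    exact measurableSet_generateFrom ⟨univ, MeasurableSet.univ, t, ht, univ_inter t⟩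
  · rintro _ ⟨s, hs, t, ht, rfl⟩
    exact (le_sup_left (a := m₁) _ hs).inter (le_sup_right (a := m₁) _ ht)

namespace ProbabilityTheory

variable {Ω : Type*} {m m' m₁ m₂ mΩ : MeasurableSpace Ω} {μ : Measure Ω} {A B : Set Ω}

lemma ae_norm_condExp_indicator_le_one : ∀ᵐ ω ∂μ, ‖(μ⟦A | m⟧) ω‖ ≤ 1 := by
  refine (ae_bdd_abs_condExp_of_ae_bdd_abs (Filter.Eventually.of_forall fun ω => ?_)).mono
    fun ω hω => (Real.norm_eq_abs _).trans_le hω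
  by_cases hω : ω ∈ A <;> simp [hω]

lemma condExp_inter_ae_eq_indicator [IsFiniteMeasure μ] (hB : MeasurableSet[m] B)
    (hA : MeasurableSet[mΩ] A) : μ⟦B ∩ A | m⟧ =ᵐ[μ] B.indicator (μ⟦A | m⟧) := by
  rw [← indicator_indicator]
  exact condExp_indicator ((integrable_const 1).indicator hA) hB

lemma condExp_indicator_condExp_ae_eq_mul [IsFiniteMeasure μ] (hm : m ≤ mΩ)
    (hB : MeasurableSet[mΩ] B) : μ[B.indicator (μ⟦A | m⟧) | m] =ᵐ[μ] μ⟦A | m⟧ * μ⟦B | m⟧ := by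
  have hB_ind : B.indicator (μ⟦A | m⟧) = μ⟦A | m⟧ * B.indicator fun _ => (1 : ℝ) := by
    ext ω
    by_cases hω : ω ∈ B <;> simp [hω]
  rw [hB_ind]
  exact condExp_stronglyMeasurable_mul_of_bound hm stronglyMeasurable_condExp
    ((integrable_const 1).indicator hB) 1 ae_norm_condExp_indicator_le_one

lemma condExp_inter_ae_eq_mul_of_condExp_ae_eq [IsFiniteMeasure μ] (hm' : m' ≤ m)
    (hm : m ≤ mΩ) (hA : MeasurableSet[mΩ] A) (hB : MeasurableSet[m] B)
    (h : μ⟦A | m⟧ =ᵐ[μ] μ⟦A | m'⟧) : μ⟦A ∩ B | m'⟧ =ᵐ[μ] μ⟦A | m'⟧ * μ⟦B | m'⟧ :=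
  calc μ⟦A ∩ B | m'⟧ =ᵐ[μ] μ[μ⟦B ∩ A | m⟧ | m'] := by
        rw [inter_comm]
        exact (condExp_condExp_of_le hm' hm).symm
    _ =ᵐ[μ] μ[B.indicator (μ⟦A | m'⟧) | m'] :=
        condExp_congr_ae <| (condExp_inter_ae_eq_indicator hB hA).trans <|
          h.mono fun ω hω => by simp only [indicator, hω]
    _ =ᵐ[μ] μ⟦A | m'⟧ * μ⟦B | m'⟧ := condExp_indicator_condExp_ae_eq_mul (hm'.trans hm) (hm B hB)

lemma condExp_ae_eq_of_forall_condExp_inter_ae_eq_mul [IsFiniteMeasure μ] (hm' : m' ≤ m)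
    (hm : m ≤ mΩ) (hA : MeasurableSet[mΩ] A)
    (h : ∀ B, MeasurableSet[m] B → μ⟦A ∩ B | m'⟧ =ᵐ[μ] μ⟦A | m'⟧ * μ⟦B | m'⟧) :
    μ⟦A | m⟧ =ᵐ[μ] μ⟦A | m'⟧ := by
  refine (ae_eq_condExp_of_forall_setIntegral_eq hm ((integrable_const 1).indicator hA)
    (fun _ _ _ => integrable_condExp.integrableOn) (fun B hB _ => ?_)
    (stronglyMeasurable_condExp.mono hm').aestronglyMeasurable).symm
  calc ∫ ω in B, (μ⟦A | m'⟧) ω ∂μ = ∫ ω, B.indicator (μ⟦A | m'⟧) ω ∂μ :=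
        (integral_indicator (hm B hB)).symm
    _ = ∫ ω, (μ[B.indicator (μ⟦A | m'⟧) | m']) ω ∂μ := (integral_condExp (hm'.trans hm)).symm
    _ = ∫ ω, (μ⟦A ∩ B | m'⟧) ω ∂μ := integral_congr_ae <|
        (condExp_indicator_condExp_ae_eq_mul (hm'.trans hm) (hm B hB)).trans (h B hB).symm
    _ = ∫ ω in B, A.indicator (fun _ => (1 : ℝ)) ω ∂μ := by
        rw [integral_condExp (hm'.trans hm), ← integral_indicator (hm B hB), indicator_indicator,
          inter_comm]

lemma condIndep_iff_forall_condExp_ae_eq [StandardBorelSpace Ω] [IsFiniteMeasure μ]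
    (hm' : m' ≤ m) (hm : m ≤ mΩ) (hm₁ : m₁ ≤ mΩ) :
    CondIndep m' m₁ m (hm'.trans hm) μ ↔
      ∀ A, MeasurableSet[m₁] A → μ⟦A | m⟧ =ᵐ[μ] μ⟦A | m'⟧ := by
  rw [condIndep_iff _ _ _ _ hm₁ hm]
  exact ⟨fun h A hA => condExp_ae_eq_of_forall_condExp_inter_ae_eq_mul hm' hm (hm₁ A hA)
      (fun B hB => h A B hA hB),
    fun h A B hA hB => condExp_inter_ae_eq_mul_of_condExp_ae_eq hm' hm (hm₁ A hA) hB (h A hA)⟩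

lemma CondIndep.sup_right_self [StandardBorelSpace Ω] [IsFiniteMeasure μ] {hm : m ≤ mΩ}
    (hm₁ : m₁ ≤ mΩ) (hm₂ : m₂ ≤ mΩ) (h : CondIndep m m₁ m₂ hm μ) :
    CondIndep m m₁ (m ⊔ m₂) hm μ := by
  refine CondIndepSets.condIndep hm₁ (sup_le hm hm₂) (@isPiSystem_measurableSet Ω m₁)
    (isPiSystem_image2_inter (@isPiSystem_measurableSet Ω m) (@isPiSystem_measurableSet Ω m₂))
    (@generateFrom_measurableSet Ω m₁).symm (sup_eq_generateFrom_image2_inter m m₂) ?_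
  rw [condIndepSets_iff _ _ {s | MeasurableSet[m₁] s} _ (fun A hA => hm₁ A hA)
    (by rintro _ ⟨B, hB, C, hC, rfl⟩; exact (hm B hB).inter (hm₂ C hC))]
  rintro A _ hA ⟨B, hB, C, hC, rfl⟩
  have hAC := (condIndep_iff _ _ _ _ hm₁ hm₂ μ).1 h A C hA hC
  calc μ⟦A ∩ (B ∩ C) | m⟧ = μ⟦B ∩ (A ∩ C) | m⟧ := by rw [inter_left_comm]
    _ =ᵐ[μ] B.indicator (μ⟦A ∩ C | m⟧) :=
        condExp_inter_ae_eq_indicator hB ((hm₁ A hA).inter (hm₂ C hC))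
    _ =ᵐ[μ] μ⟦A | m⟧ * B.indicator (μ⟦C | m⟧) := hAC.mono fun ω hω => by
        by_cases hωB : ω ∈ B <;> simp [hωB, hω]
    _ =ᵐ[μ] μ⟦A | m⟧ * μ⟦B ∩ C | m⟧ :=
        (condExp_inter_ae_eq_indicator hB (hm₂ C hC)).mono fun ω hω => by simp [hω]

theorem CondIndep.contraction [StandardBorelSpace Ω] [IsFiniteMeasure μ] (hm' : m' ≤ m)
    (hm : m ≤ mΩ) (hm₁ : m₁ ≤ mΩ) (hm₂ : m₂ ≤ mΩ) (h₁ : CondIndep m' m₁ m (hm'.trans hm) μ)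
    (h₂ : CondIndep m m₁ m₂ hm μ) : CondIndep m' m₁ (m ⊔ m₂) (hm'.trans hm) μ := by
  have hsup := (condIndep_iff_forall_condExp_ae_eq le_sup_left (sup_le hm hm₂) hm₁).1
    (h₂.sup_right_self hm₁ hm₂)
  rw [condIndep_iff_forall_condExp_ae_eq hm' hm hm₁] at h₁
  exact (condIndep_iff_forall_condExp_ae_eq (hm'.trans le_sup_left) (sup_le hm hm₂) hm₁).2
    fun A hA => (hsup A hA).trans (h₁ A hA)

end ProbabilityTheory

/-- **Independence property of Pt-scores.** Let `V` give weak ignorability in the sense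
that `Y t ⟂ T | V`, and let `P t` be a measurable function of `V` such that
`Y t ⟂ V | P t (V)` (a Pt-score). Then `Y t` is conditionally independent of the pair
`(V, T)` given `P t (V)`. -/
theorem pt_score_indep
    {Ω 𝒱 𝒬 𝒴 : Type*}
    [MeasurableSpace Ω] [StandardBorelSpace Ω]
    [MeasurableSpace 𝒱] [MeasurableSpace 𝒬] [MeasurableSpace 𝒴]
    (μ : Measure Ω) [IsProbabilityMeasure μ]
    (T : Ω → Bool) (hT : Measurable T)
    (V : Ω → 𝒱) (hV : Measurable V)
    (Y : Bool → Ω → 𝒴) (hY : ∀ t, Measurable (Y t))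
    (P : Bool → 𝒱 → 𝒬) (hP : ∀ t, Measurable (P t))
    -- exchangeability given `V`: `Y t ⟂ T | V`
    (hexch : ∀ t, CondIndepFun (MeasurableSpace.comap V inferInstance)
        hV.comap_le (Y t) T μ)
    -- Pt-score: `Y t ⟂ V | P t (V)`
    (hscore : ∀ t, CondIndepFun
        (MeasurableSpace.comap (fun ω => P t (V ω)) inferInstance)
        (((hP t).comp hV).comap_le) (Y t) V μ) :
    -- conclusion: `Y t ⟂ (V, T) | P t (V)`
    ∀ t, CondIndepFun
        (MeasurableSpace.comap (fun ω => P t (V ω)) inferInstance)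
        (((hP t).comp hV).comap_le) (Y t) (fun ω => (V ω, T ω)) μ := by
  intro t
  have hPV : MeasurableSpace.comap (fun ω => P t (V ω)) inferInstance ≤
      MeasurableSpace.comap V inferInstance := by
    rw [← Function.comp_def, ← comap_comp]
    exact comap_mono (hP t).comap_le
  rw [condIndepFun_iff_condIndep, Prod.instMeasurableSpace, comap_prodMk]
  exact ((condIndepFun_iff_condIndep _ _ _ _ _).1 (hscore t)).contraction hPV hV.comap_le
    (hY t).comap_le hT.comap_le ((condIndepFun_iff_condIndep _ _ _ _ _).1 (hexch t))
end

section
/- Let β(V) be a measurable function of a random variable V, and let e(V) := P(T = 1 | σ(V)) be the propensity score. Then β(V) is a balancing score (i.e., T is conditionally independent of V given β(V)) if and only if e(V) is a.s. equal to a σ(β(V))-measurable function, i.e., e(V) = f(β(V)) a.s. for some measurable f. Moreover, if V gives weak ignorability (Y(t) ⊥ T | V and P(T = t | σ(V)) > 0 a.s. for t ∈ {0,1}), then β(V) also gives weak ignorability: Y(t) ⊥ T | β(V) and P(T = t | σ(β(V))) > 0 a.s. -/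
open MeasureTheory ProbabilityTheory

/-!
Write `A = {T = true}` and `m₁ = σ(β(V)) ≤ m₂ = σ(V)`. Since `σ(T)` is generated by `A`,
`T ⟂ X | m₁` amounts to the product rule `P(A ∩ D | m₁) = P(A | m₁) P(D | m₁)` for `D ∈ σ(X)`.
If `T ⟂ V | m₁`, integrating this rule over the sets `D ∈ m₂` shows that `P(A | m₁)` is a version
of `P(A | m₂)`: the propensity score is `m₁`-measurable, i.e. a measurable function of `β(V)`
(Doob–Dynkin). Conversely, once `P(A | m₂)` is `m₁`-measurable, the tower property and the
pull-out property carry every product rule given `m₂` down to `m₁`. Applied to `D ∈ σ(V)`, which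
is trivially independent of `T` given `σ(V)`, and to `D ∈ σ(Y t)`, this yields the balancing
property and `Y t ⟂ T | β(V)`; positivity transfers since `P(T = t | m₁) = P(T = t | m₂)`.
-/

section CondExp

variable {Ω : Type*} {m₁ m₂ mΩ : MeasurableSpace Ω} {μ : Measure Ω}

lemma ae_abs_condExp_indicator_le_one (m : MeasurableSpace Ω) (s : Set Ω) :
    ∀ᵐ ω ∂μ, |(μ⟦s | m⟧) ω| ≤ 1 :=
  ae_bdd_abs_condExp_of_ae_bdd_abs <| Filter.Eventually.of_forall fun ω ↦ by
    by_cases h : ω ∈ s <;> simp [h]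

lemma condExp_condExp_indicator_mul [IsFiniteMeasure μ] (hm : m₁ ≤ mΩ) (s : Set Ω)
    {g : Ω → ℝ} (hg : Integrable g μ) :
    μ[μ⟦s | m₁⟧ * g | m₁] =ᵐ[μ] μ⟦s | m₁⟧ * μ[g | m₁] :=
  condExp_stronglyMeasurable_mul_of_bound hm stronglyMeasurable_condExp hg 1 <| by
    simpa only [Real.norm_eq_abs] using ae_abs_condExp_indicator_le_one m₁ s

lemma condExp_ae_eq_condExp_iff_aestronglyMeasurable [IsFiniteMeasure μ]
    (hm₁₂ : m₁ ≤ m₂) (hm₂ : m₂ ≤ mΩ) {f : Ω → ℝ} :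
    μ[f | m₂] =ᵐ[μ] μ[f | m₁] ↔ AEStronglyMeasurable[m₁] (μ[f | m₂]) μ := by
  refine ⟨fun h ↦ ⟨_, stronglyMeasurable_condExp, h⟩, fun h ↦ ?_⟩
  calc μ[f | m₂] =ᵐ[μ] μ[μ[f | m₂] | m₁] :=
        (condExp_of_aestronglyMeasurable' (hm₁₂.trans hm₂) h integrable_condExp).symm
    _ =ᵐ[μ] μ[f | m₁] := condExp_condExp_of_le hm₁₂ hm₂

lemma condExp_indicator_inter_ae_eq_mul_of_le [IsFiniteMeasure μ]
    (hm₁₂ : m₁ ≤ m₂) (hm₂ : m₂ ≤ mΩ) {A D : Set Ω} (hA : μ⟦A | m₂⟧ =ᵐ[μ] μ⟦A | m₁⟧)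
    (hAD : μ⟦A ∩ D | m₂⟧ =ᵐ[μ] μ⟦A | m₂⟧ * μ⟦D | m₂⟧) :
    μ⟦A ∩ D | m₁⟧ =ᵐ[μ] μ⟦A | m₁⟧ * μ⟦D | m₁⟧ :=
  calc μ⟦A ∩ D | m₁⟧ =ᵐ[μ] μ[μ⟦A ∩ D | m₂⟧ | m₁] := (condExp_condExp_of_le hm₁₂ hm₂).symm
    _ =ᵐ[μ] μ[μ⟦A | m₁⟧ * μ⟦D | m₂⟧ | m₁] :=
        condExp_congr_ae (hAD.trans (hA.mul Filter.EventuallyEq.rfl))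
    _ =ᵐ[μ] μ⟦A | m₁⟧ * μ[μ⟦D | m₂⟧ | m₁] :=
        condExp_condExp_indicator_mul (hm₁₂.trans hm₂) A integrable_condExp
    _ =ᵐ[μ] μ⟦A | m₁⟧ * μ⟦D | m₁⟧ := Filter.EventuallyEq.rfl.mul (condExp_condExp_of_le hm₁₂ hm₂)

lemma condExp_indicator_ae_eq_of_forall_inter_eq_mul [IsFiniteMeasure μ]
    (hm₁₂ : m₁ ≤ m₂) (hm₂ : m₂ ≤ mΩ) {A : Set Ω} (hA : MeasurableSet A)
    (hAD : ∀ D, MeasurableSet[m₂] D → μ⟦A ∩ D | m₁⟧ =ᵐ[μ] μ⟦A | m₁⟧ * μ⟦D | m₁⟧) :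
    μ⟦A | m₂⟧ =ᵐ[μ] μ⟦A | m₁⟧ := by
  have hm₁ := hm₁₂.trans hm₂
  refine (ae_eq_condExp_of_forall_setIntegral_eq hm₂ ((integrable_const 1).indicator hA)
    (fun _ _ _ ↦ integrable_condExp.integrableOn) (fun D hD _ ↦ ?_)
    (stronglyMeasurable_condExp.mono hm₁₂).aestronglyMeasurable).symm
  have hD' : MeasurableSet D := hm₂ D hD
  calc ∫ ω in D, (μ⟦A | m₁⟧) ω ∂μ = ∫ ω, (μ⟦A | m₁⟧ * D.indicator fun _ ↦ (1 : ℝ)) ω ∂μ := by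
        rw [← integral_indicator hD']
        congr 1 with ω
        by_cases h : ω ∈ D <;> simp [h]
    _ = ∫ ω, (μ⟦A | m₁⟧ * μ⟦D | m₁⟧) ω ∂μ := by
        rw [← integral_condExp hm₁]
        exact integral_congr_ae
          (condExp_condExp_indicator_mul hm₁ A ((integrable_const 1).indicator hD'))
    _ = ∫ ω, (μ⟦A ∩ D | m₁⟧) ω ∂μ := integral_congr_ae (hAD D hD).symm
    _ = ∫ ω in D, A.indicator (fun _ ↦ (1 : ℝ)) ω ∂μ := by
        rw [integral_condExp hm₁, ← integral_indicator hD', Set.indicator_indicator,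
          Set.inter_comm]

end CondExp

lemma aestronglyMeasurable_comap_iff_exists_comp {Ω Y Z : Type*} {mΩ : MeasurableSpace Ω}
    [MeasurableSpace Y] [TopologicalSpace Z] [TopologicalSpace.IsCompletelyMetrizableSpace Z]
    [Nonempty Z] {μ : Measure Ω} {φ : Ω → Y} {g : Ω → Z} :
    AEStronglyMeasurable[MeasurableSpace.comap φ inferInstance] g μ ↔
      ∃ f : Y → Z, StronglyMeasurable f ∧ g =ᵐ[μ] f ∘ φ := by
  constructor
  · rintro ⟨g', hg', hgg'⟩
    obtain ⟨f, hf, rfl⟩ := hg'.exists_eq_measurable_comp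
    exact ⟨f, hf, hgg'⟩
  · rintro ⟨f, hf, hgf⟩
    exact ⟨f ∘ φ, hf.comp_measurable (comap_measurable φ), hgf⟩

lemma comap_bool_eq_generateFrom {Ω : Type*} (T : Ω → Bool) :
    MeasurableSpace.comap T inferInstance = MeasurableSpace.generateFrom {T ⁻¹' {true}} :=
  le_antisymm
    (@measurable_to_bool _ (MeasurableSpace.generateFrom _) T
      (MeasurableSpace.measurableSet_generateFrom (Set.mem_singleton _))).comap_le
    (MeasurableSpace.generateFrom_singleton_le ⟨{true}, trivial, rfl⟩)

section CondIndep

variable {Ω 𝒳 : Type*} {m₁ m₂ : MeasurableSpace Ω} {mΩ : MeasurableSpace Ω} [StandardBorelSpace Ω]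
  [MeasurableSpace 𝒳] {μ : Measure Ω} [IsFiniteMeasure μ] {T : Ω → Bool} {X : Ω → 𝒳}

lemma condIndepFun_bool_iff (hm : m₁ ≤ mΩ) (hT : Measurable T) (hX : Measurable X) :
    CondIndepFun m₁ hm T X μ ↔ ∀ s, MeasurableSet s →
      μ⟦T ⁻¹' {true} ∩ X ⁻¹' s | m₁⟧ =ᵐ[μ] μ⟦T ⁻¹' {true} | m₁⟧ * μ⟦X ⁻¹' s | m₁⟧ := by
  refine ⟨fun h s hs ↦ (condIndepFun_iff_condExp_inter_preimage_eq_mul hT hX).1 h {true} s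
    (measurableSet_singleton _) hs, fun h ↦ ?_⟩
  rw [condIndepFun_iff_condIndep]
  refine CondIndepSets.condIndep (p1 := {T ⁻¹' {true}})
    (p2 := {s | MeasurableSet[MeasurableSpace.comap X inferInstance] s})
    hT.comap_le hX.comap_le (.singleton _)
    (@MeasurableSpace.isPiSystem_measurableSet _ (.comap X inferInstance))
    (comap_bool_eq_generateFrom T)
    (@MeasurableSpace.generateFrom_measurableSet _ (.comap X inferInstance)).symm ?_
  refine (condIndepSets_iff _ _ _ _ (by rintro _ rfl; exact hT (measurableSet_singleton _))
    (fun _ hs ↦ hX.comap_le _ hs) μ).2 ?_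
  rintro _ _ rfl ⟨s, hs, rfl⟩
  exact h s hs

lemma CondIndepFun.condExp_indicator_preimage_ae_eq {𝒯 : Type*} [MeasurableSpace 𝒯]
    {T : Ω → 𝒯} (hT : Measurable T) (hX : Measurable X)
    (hm : m₁ ≤ MeasurableSpace.comap X inferInstance)
    (h : CondIndepFun m₁ (hm.trans hX.comap_le) T X μ) {s : Set 𝒯} (hs : MeasurableSet s) :
    μ⟦T ⁻¹' s | MeasurableSpace.comap X inferInstance⟧ =ᵐ[μ] μ⟦T ⁻¹' s | m₁⟧ := by
  refine condExp_indicator_ae_eq_of_forall_inter_eq_mul hm hX.comap_le (hT hs) ?_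
  rintro _ ⟨t, ht, rfl⟩
  exact (condIndepFun_iff_condExp_inter_preimage_eq_mul hT hX).1 h s t hs ht

lemma CondIndepFun.of_le_of_condExp_ae_eq (hm₁₂ : m₁ ≤ m₂) (hm₂ : m₂ ≤ mΩ)
    (hT : Measurable T) (hX : Measurable X)
    (hprop : μ⟦T ⁻¹' {true} | m₂⟧ =ᵐ[μ] μ⟦T ⁻¹' {true} | m₁⟧) (h : CondIndepFun m₂ hm₂ T X μ) :
    CondIndepFun m₁ (hm₁₂.trans hm₂) T X μ := by
  rw [condIndepFun_bool_iff _ hT hX] at h ⊢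
  exact fun s hs ↦ condExp_indicator_inter_ae_eq_mul_of_le hm₁₂ hm₂ hprop (h s hs)

lemma condIndepFun_bool_iff_condExp_ae_eq (hT : Measurable T) (hX : Measurable X)
    (hm : m₁ ≤ MeasurableSpace.comap X inferInstance) :
    CondIndepFun m₁ (hm.trans hX.comap_le) T X μ ↔
      μ⟦T ⁻¹' {true} | MeasurableSpace.comap X inferInstance⟧ =ᵐ[μ] μ⟦T ⁻¹' {true} | m₁⟧ :=
  ⟨fun h ↦ CondIndepFun.condExp_indicator_preimage_ae_eq hT hX hm h (measurableSet_singleton _),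
    fun h ↦ CondIndepFun.of_le_of_condExp_ae_eq hm hX.comap_le hT hX h
      (condIndepFun_of_measurable_right hT (comap_measurable X))⟩

end CondIndep

lemma ite_eq_indicator_preimage_singleton {Ω α : Type*} [DecidableEq α] (T : Ω → α) (t : α) :
    (fun ω ↦ if T ω = t then (1 : ℝ) else 0) = (T ⁻¹' {t}).indicator fun _ ↦ 1 := by
  ext ω
  by_cases h : T ω = t <;> simp [h]

/-- **Balancing scores.** Let `β` be a measurable function of `V` and let
`e(V) := P(T = 1 | σ(V))` be the propensity score. Then `β(V)` is a balancing score
(`T ⟂ V | β(V)`) iff `e(V) = f(β(V))` a.s. for some measurable `f`. Moreover, if `V`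
gives weak ignorability (`Y t ⟂ T | V` and `P(T = t | σ(V)) > 0` a.s. for both `t`),
then a balancing score `β(V)` also gives weak ignorability: `Y t ⟂ T | β(V)` and
`P(T = t | σ(β(V))) > 0` a.s. -/
theorem balancing_score_iff_propensity_measurable
    {Ω 𝒱 ℬ 𝒴 : Type*}
    [MeasurableSpace Ω] [StandardBorelSpace Ω]
    [MeasurableSpace 𝒱] [MeasurableSpace ℬ] [MeasurableSpace 𝒴]
    (μ : Measure Ω) [IsProbabilityMeasure μ]
    (T : Ω → Bool) (hT : Measurable T)
    (V : Ω → 𝒱) (hV : Measurable V)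
    (Y : Bool → Ω → 𝒴) (hY : ∀ t, Measurable (Y t))
    (β : 𝒱 → ℬ) (hβ : Measurable β) :
    -- (1) balancing score iff the propensity is a measurable function of `β(V)`
    ((CondIndepFun (MeasurableSpace.comap (fun ω => β (V ω)) inferInstance)
        ((hβ.comp hV).comap_le) T V μ)
      ↔ ∃ f : ℬ → ℝ, Measurable f ∧
          (μ[(fun ω => if T ω = true then (1 : ℝ) else 0) |
              MeasurableSpace.comap V inferInstance]
            =ᵐ[μ] fun ω => f (β (V ω))))
    ∧
    -- (2) a balancing score inherits weak ignorability from `V`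
    ((∀ t, CondIndepFun (MeasurableSpace.comap V inferInstance) hV.comap_le (Y t) T μ) →
     (∀ t : Bool, ∀ᵐ ω ∂μ,
        0 < (μ[(fun ω => if T ω = t then (1 : ℝ) else 0) |
              MeasurableSpace.comap V inferInstance]) ω) →
     (CondIndepFun (MeasurableSpace.comap (fun ω => β (V ω)) inferInstance)
        ((hβ.comp hV).comap_le) T V μ) →
     ((∀ t, CondIndepFun (MeasurableSpace.comap (fun ω => β (V ω)) inferInstance)
          ((hβ.comp hV).comap_le) (Y t) T μ) ∧
      (∀ t : Bool, ∀ᵐ ω ∂μ,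
        0 < (μ[(fun ω => if T ω = t then (1 : ℝ) else 0) |
              MeasurableSpace.comap (fun ω => β (V ω)) inferInstance]) ω))) := by
  have hβV : MeasurableSpace.comap (fun ω ↦ β (V ω)) inferInstance ≤
      MeasurableSpace.comap V inferInstance :=
    (hβ.comp (comap_measurable V)).comap_le
  simp only [ite_eq_indicator_preimage_singleton]
  refine ⟨?_, fun hYT hpos hbal ↦ ?_⟩
  · rw [condIndepFun_bool_iff_condExp_ae_eq hT hV hβV,
      condExp_ae_eq_condExp_iff_aestronglyMeasurable hβV hV.comap_le,
      aestronglyMeasurable_comap_iff_exists_comp]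
    simp only [stronglyMeasurable_iff_measurable]
    rfl
  have hprop : ∀ t : Bool, μ⟦T ⁻¹' {t} | MeasurableSpace.comap V inferInstance⟧ =ᵐ[μ]
      μ⟦T ⁻¹' {t} | MeasurableSpace.comap (fun ω ↦ β (V ω)) inferInstance⟧ := fun t ↦
    CondIndepFun.condExp_indicator_preimage_ae_eq hT hV hβV hbal (measurableSet_singleton t)
  refine ⟨fun t ↦ (CondIndepFun.of_le_of_condExp_ae_eq hβV hV.comap_le hT (hY t) (hprop true)
    (hYT t).symm).symm, fun t ↦ ?_⟩
  filter_upwards [hpos t, hprop t] with ω hω h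
  rwa [← h]
end

section
/- (Counterfactual mean from factual score distribution under balancing.) Let 𝔹 be a B-score with functions 𝔽_0, 𝔽_1, and suppose 𝔹 is balanced: T is conditionally independent of 𝔹 given X. Then for each t ∈ {0,1}, the counterfactual conditional mean outcome is given by the factual conditional score distribution: μ_{1−t}(x) = E[𝔽_{1−t}(𝔹) | X = x, T = t] for a.e. x with P(T = t | X = x) > 0; equivalently, μ_{1−t}(x) = E[𝔽_{1−t}(𝔹) | X = x]. -/
/-!
Balancing `T ⟂ B | X` means that adding `T` to the conditioning on `X` does not change the
conditional expectation of a function of `B`, so `E[F_{1-t}(B) | X, T] = E[F_{1-t}(B) | X]`;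
and by the tower property through `σ(B, X)` and the B-score property,
`E[F_{1-t}(B) | X] = E[E[Y(1-t) | B, X] | X] = μ_{1-t}(X)`.

The first identity is checked on the π-system of sets `u ∩ s`, `u ∈ σ(X)`, `s ∈ σ(T)`.
Conditional independence first gives `P(s | X, B) = P(s | X)`; pulling the conditional
expectations out then turns `∫_{u ∩ s} f` into `∫_u P(s | X) f` for `σ(B)`-measurable `f`,
and the same holds for `E[f | X]` in place of `f`.
-/

open MeasureTheory ProbabilityTheory Set

section PiSystem

variable {α : Type*}

theorem isPiSystem_image2_inter_s17 {S T : Set (Set α)} (hS : IsPiSystem S) (hT : IsPiSystem T) :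
    IsPiSystem (image2 (· ∩ ·) S T) := by
  rintro _ ⟨s, hs, t, ht, rfl⟩ _ ⟨s', hs', t', ht', rfl⟩ hne
  rw [inter_inter_inter_comm] at hne ⊢
  exact ⟨s ∩ s', hS s hs s' hs' (hne.mono inter_subset_left),
    t ∩ t', hT t ht t' ht' (hne.mono inter_subset_right), rfl⟩

theorem generateFrom_image2_inter_measurableSet (m₁ m₂ : MeasurableSpace α) :
    MeasurableSpace.generateFrom
      (image2 (· ∩ ·) {s | MeasurableSet[m₁] s} {t | MeasurableSet[m₂] t}) = m₁ ⊔ m₂ := by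
  refine le_antisymm (MeasurableSpace.generateFrom_le ?_) (sup_le (fun s hs => ?_) fun t ht => ?_)
  · rintro _ ⟨s, hs, t, ht, rfl⟩
    exact (le_sup_left (a := m₁) _ hs).inter (le_sup_right (a := m₁) _ ht)
  · exact MeasurableSpace.measurableSet_generateFrom ⟨s, hs, univ, .univ, inter_univ s⟩
  · exact MeasurableSpace.measurableSet_generateFrom ⟨univ, .univ, t, ht, univ_inter t⟩

end PiSystem

theorem Set.indicator_one_smul_apply {α R M : Type*} [MonoidWithZero R] [Zero M]
    [MulActionWithZero R M] (s : Set α) (f : α → M) (x : α) :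
    s.indicator (fun _ => (1 : R)) x • f x = s.indicator f x := by
  by_cases hx : x ∈ s <;> simp [hx]

namespace MeasureTheory

variable {Ω E : Type*} [NormedAddCommGroup E] [NormedSpace ℝ E]
  {m m₀ : MeasurableSpace Ω} {μ : Measure Ω}

theorem setIntegral_eq_of_isPiSystem (hm : m ≤ m₀) {f g : Ω → E} (hf : Integrable f μ)
    (hg : Integrable g μ) {C : Set (Set Ω)} (hgen : m = MeasurableSpace.generateFrom C)
    (hC : IsPiSystem C) (hfg : ∀ s ∈ C, ∫ x in s, f x ∂μ = ∫ x in s, g x ∂μ)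
    (huniv : ∫ x, f x ∂μ = ∫ x, g x ∂μ) {s : Set Ω} (hs : MeasurableSet[m] s) :
    ∫ x in s, f x ∂μ = ∫ x in s, g x ∂μ := by
  have trim_apply : ∀ {h : Ω → E}, Integrable h μ → ∀ {s}, MeasurableSet[m] s →
      (μ.withDensityᵥ h).trim hm s = ∫ x in s, h x ∂μ := fun hh s hs => by
    rw [VectorMeasure.trim_measurableSet_eq hm hs, withDensityᵥ_apply hh (hm s hs)]
  have hCm : ∀ s ∈ C, MeasurableSet[m] s :=
    fun s hs => hgen ▸ MeasurableSpace.measurableSet_generateFrom hs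
  have htrim : (μ.withDensityᵥ f).trim hm = (μ.withDensityᵥ g).trim hm := by
    refine VectorMeasure.ext_of_generateFrom C (fun s hs => ?_) hgen hC ?_
    · rw [trim_apply hf (hCm s hs), trim_apply hg (hCm s hs), hfg s hs]
    · rw [trim_apply hf .univ, trim_apply hg .univ, setIntegral_univ, setIntegral_univ, huniv]
  rw [← trim_apply hf hs, ← trim_apply hg hs, htrim]

theorem setIntegral_indicator_one_smul {f : Ω → E} {s u : Set Ω} (hs : MeasurableSet[m₀] s) :
    ∫ x in u, s.indicator (fun _ => (1 : ℝ)) x • f x ∂μ = ∫ x in u ∩ s, f x ∂μ := by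
  simp_rw [indicator_one_smul_apply, setIntegral_indicator hs]

theorem Integrable.indicator_one_smul {f : Ω → E} (hf : Integrable f μ) {s : Set Ω}
    (hs : MeasurableSet[m₀] s) : Integrable ((s.indicator fun _ => (1 : ℝ)) • f) μ := by
  rw [show (s.indicator fun _ => (1 : ℝ)) • f = s.indicator f from
    funext (indicator_one_smul_apply s f)]
  exact hf.indicator hs

variable [CompleteSpace E]

theorem setIntegral_condExp_smul (hm : m ≤ m₀) [SigmaFinite (μ.trim hm)] {g : Ω → ℝ} {h : Ω → E}
    (hg : Integrable g μ) (hgh : Integrable (g • h) μ) (hh : AEStronglyMeasurable[m] h μ)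
    {u : Set Ω} (hu : MeasurableSet[m] u) :
    ∫ x in u, μ[g | m] x • h x ∂μ = ∫ x in u, g x • h x ∂μ :=
  (setIntegral_congr_ae (hm u hu) ((condExp_smul_of_aestronglyMeasurable_right hg hgh hh).mono
    fun _ hx _ => hx.symm)).trans (setIntegral_condExp hm hgh hu)

theorem setIntegral_smul_condExp (hm : m ≤ m₀) [SigmaFinite (μ.trim hm)] {p : Ω → ℝ} {g : Ω → E}
    (hp : AEStronglyMeasurable[m] p μ) (hpg : Integrable (p • g) μ) (hg : Integrable g μ)
    {u : Set Ω} (hu : MeasurableSet[m] u) :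
    ∫ x in u, p x • μ[g | m] x ∂μ = ∫ x in u, p x • g x ∂μ :=
  (setIntegral_congr_ae (hm u hu) ((condExp_smul_of_aestronglyMeasurable_left hp hpg hg).mono
    fun _ hx _ => hx.symm)).trans (setIntegral_condExp hm hpg hu)

theorem condExp_ae_eq_condExp_sup_of_forall_setIntegral_inter_eq [IsFiniteMeasure μ]
    {m₁ : MeasurableSpace Ω} (hm : m ≤ m₀) (hm₁ : m₁ ≤ m₀) {f : Ω → E} (hf : Integrable f μ)
    (h : ∀ u s, MeasurableSet[m] u → MeasurableSet[m₁] s →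
      ∫ x in u ∩ s, μ[f | m] x ∂μ = ∫ x in u ∩ s, f x ∂μ) :
    μ[f | m] =ᵐ[μ] μ[f | m ⊔ m₁] :=
  ae_eq_condExp_of_forall_setIntegral_eq (sup_le hm hm₁) hf
    (fun _ _ _ => integrable_condExp.integrableOn)
    (fun _ hA _ => setIntegral_eq_of_isPiSystem (sup_le hm hm₁) integrable_condExp hf
      (generateFrom_image2_inter_measurableSet m m₁).symm
      (isPiSystem_image2_inter_s17 (@MeasurableSpace.isPiSystem_measurableSet Ω m)
        (@MeasurableSpace.isPiSystem_measurableSet Ω m₁))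
      (by rintro _ ⟨u, hu, s, hs, rfl⟩; exact h u s hu hs) (integral_condExp hm) hA)
    (stronglyMeasurable_condExp.mono le_sup_left).aestronglyMeasurable

end MeasureTheory

namespace ProbabilityTheory.CondIndep

variable {Ω : Type*} {m m₁ m₂ mΩ : MeasurableSpace Ω} [StandardBorelSpace Ω] {μ : Measure Ω}
  [IsFiniteMeasure μ] {hm : m ≤ mΩ}

theorem condExp_indicator_ae_eq_condExp_sup (hind : CondIndep m m₁ m₂ hm μ) (hm₁ : m₁ ≤ mΩ)
    (hm₂ : m₂ ≤ mΩ) {s : Set Ω} (hs : MeasurableSet[m₁] s) :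
    μ⟦s | m⟧ =ᵐ[μ] μ⟦s | m ⊔ m₂⟧ := by
  refine condExp_ae_eq_condExp_sup_of_forall_setIntegral_inter_eq hm hm₂
    ((integrable_const 1).indicator (hm₁ s hs)) fun u t hu ht => ?_
  have hmt : MeasurableSet t := hm₂ t ht
  have hprod := (condIndep_iff m m₁ m₂ hm hm₁ hm₂ μ).mp hind s t hs ht
  calc ∫ x in u ∩ t, (μ⟦s | m⟧) x ∂μ
      = ∫ x in u, t.indicator (fun _ => (1 : ℝ)) x • (μ⟦s | m⟧) x ∂μ :=
        (setIntegral_indicator_one_smul hmt).symm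
    _ = ∫ x in u, (μ⟦t | m⟧) x • (μ⟦s | m⟧) x ∂μ :=
        (setIntegral_condExp_smul hm ((integrable_const 1).indicator hmt)
          (integrable_condExp.indicator_one_smul hmt)
          stronglyMeasurable_condExp.aestronglyMeasurable hu).symm
    _ = ∫ x in u, (μ⟦s ∩ t | m⟧) x ∂μ :=
        setIntegral_congr_ae (hm u hu) (hprod.mono fun x hx _ => by
          rw [hx, Pi.mul_apply, smul_eq_mul, mul_comm])
    _ = ∫ x in u ∩ t, s.indicator (fun _ => (1 : ℝ)) x ∂μ := by
        rw [setIntegral_condExp hm ((integrable_const 1).indicator ((hm₁ s hs).inter hmt)) hu,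
          inter_comm s t, ← indicator_indicator, setIntegral_indicator hmt]

theorem condExp_sup_ae_eq_condExp {E : Type*} [NormedAddCommGroup E] [NormedSpace ℝ E]
    [CompleteSpace E] (hind : CondIndep m m₁ m₂ hm μ) (hm₁ : m₁ ≤ mΩ) (hm₂ : m₂ ≤ mΩ)
    {f : Ω → E} (hf : StronglyMeasurable[m₂] f) :
    μ[f | m ⊔ m₁] =ᵐ[μ] μ[f | m] := by
  by_cases hfi : Integrable f μ
  swap
  · simp [condExp_of_not_integrable hfi]
  refine (condExp_ae_eq_condExp_sup_of_forall_setIntegral_inter_eq hm hm₁ hfi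
    fun u s hu hs => ?_).symm
  have hms : MeasurableSet s := hm₁ s hs
  have hs_int : Integrable (s.indicator fun _ => (1 : ℝ)) μ := (integrable_const 1).indicator hms
  have hbdd : ∀ᵐ x ∂μ, ‖(μ⟦s | m⟧) x‖ ≤ 1 := ae_bdd_norm_condExp_of_ae_bdd_norm
    (ae_of_all _ fun x => (norm_indicator_le_norm_self _ x).trans norm_one.le)
  calc ∫ x in u ∩ s, μ[f | m] x ∂μ
      = ∫ x in u, s.indicator (fun _ => (1 : ℝ)) x • μ[f | m] x ∂μ :=
        (setIntegral_indicator_one_smul hms).symm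
    _ = ∫ x in u, (μ⟦s | m⟧) x • μ[f | m] x ∂μ :=
        (setIntegral_condExp_smul hm hs_int (integrable_condExp.indicator_one_smul hms)
          stronglyMeasurable_condExp.aestronglyMeasurable hu).symm
    _ = ∫ x in u, (μ⟦s | m⟧) x • f x ∂μ :=
        setIntegral_smul_condExp hm stronglyMeasurable_condExp.aestronglyMeasurable
          (hfi.bdd_smul 1 integrable_condExp.aestronglyMeasurable hbdd) hfi hu
    _ = ∫ x in u, (μ⟦s | m ⊔ m₂⟧) x • f x ∂μ :=
        setIntegral_congr_ae (hm u hu)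
          ((hind.condExp_indicator_ae_eq_condExp_sup hm₁ hm₂ hs).mono fun x hx _ => by rw [hx])
    _ = ∫ x in u ∩ s, f x ∂μ := by
        rw [setIntegral_condExp_smul (sup_le hm hm₂) hs_int (hfi.indicator_one_smul hms)
          (hf.mono (le_sup_right (a := m))).aestronglyMeasurable (le_sup_left (a := m) u hu),
          setIntegral_indicator_one_smul hms]

end ProbabilityTheory.CondIndep

theorem counterfactual_mean_balanced_general
    {Ω : Type*} [MeasurableSpace Ω] [StandardBorelSpace Ω]
    (μ : Measure Ω) [IsProbabilityMeasure μ]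
    {m n d : ℕ}
    (X : Ω → Fin m → ℝ) (hX : Measurable X)
    (T : Ω → Bool) (hT : Measurable T)
    (Y : Bool → Ω → Fin d → ℝ)
    (B : Ω → Fin n → ℝ) (hB : Measurable B)
    (F : Bool → (Fin n → ℝ) → Fin d → ℝ) (hF : ∀ t, Measurable (F t))
    -- `B` is a B-score with outcome-mean functions `F t`
    (hscore₁ : ∀ t, μ[Y t | MeasurableSpace.comap (fun ω => (B ω, X ω)) inferInstance]
        =ᵐ[μ] fun ω => F t (B ω))
    -- balancing: `T ⟂ B | X`
    (hbal : CondIndepFun (MeasurableSpace.comap X inferInstance) hX.comap_le T B μ) :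
    ∀ t : Bool,
      -- `μ_{1−t}(x) = E[F (1−t) (B) | X = x, T = t]` on the positivity region
      (∀ᵐ ω ∂μ, T ω = t →
        (μ[Y (!t) | MeasurableSpace.comap X inferInstance]) ω
          = (μ[(fun ω => F (!t) (B ω)) |
              MeasurableSpace.comap (fun ω => (X ω, T ω)) inferInstance]) ω)
      ∧
      -- equivalently, `μ_{1−t}(x) = E[F (1−t) (B) | X = x]`
      (μ[Y (!t) | MeasurableSpace.comap X inferInstance]
        =ᵐ[μ] μ[(fun ω => F (!t) (B ω)) | MeasurableSpace.comap X inferInstance]) := by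
  intro t
  have hind := (condIndepFun_iff_condIndep _ _ _ _ μ).mp hbal
  have hbalanced : μ[(fun ω => F (!t) (B ω)) |
        MeasurableSpace.comap (fun ω => (X ω, T ω)) inferInstance]
      =ᵐ[μ] μ[(fun ω => F (!t) (B ω)) | MeasurableSpace.comap X inferInstance] := by
    rw [show MeasurableSpace.comap (fun ω => (X ω, T ω)) inferInstance
        = MeasurableSpace.comap X inferInstance ⊔ MeasurableSpace.comap T inferInstance
      from MeasurableSpace.comap_prodMk X T]
    exact hind.condExp_sup_ae_eq_condExp hT.comap_le hB.comap_le
      ((hF _).comp (comap_measurable B)).stronglyMeasurable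
  have htower : μ[Y (!t) | MeasurableSpace.comap X inferInstance]
      =ᵐ[μ] μ[(fun ω => F (!t) (B ω)) | MeasurableSpace.comap X inferInstance] := by
    have hle : MeasurableSpace.comap X inferInstance
        ≤ MeasurableSpace.comap (fun ω => (B ω, X ω)) inferInstance :=
      (measurable_snd.comp (comap_measurable fun ω => (B ω, X ω))).comap_le
    exact (condExp_condExp_of_le hle (hB.prodMk hX).comap_le).symm.trans
      (condExp_congr_ae (hscore₁ (!t)))
  exact ⟨(htower.trans hbalanced.symm).mono fun _ h _ => h, htower⟩

/-- **Counterfactual mean from the factual score distribution under balancing.** Let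
`B` be a B-score with outcome-mean functions `F t`, and suppose `B` is balanced:
`T ⟂ B | X`. Then for each `t`, the counterfactual conditional mean outcome is given
by the factual conditional score distribution:
`μ_{1−t}(x) = E[F (1−t) (B) | X = x, T = t]` for a.e. `x` with `P(T = t | X = x) > 0`;
equivalently, `μ_{1−t}(x) = E[F (1−t) (B) | X = x]`. -/
theorem counterfactual_mean_balanced
    {Ω : Type*} [MeasurableSpace Ω] [StandardBorelSpace Ω]
    (μ : Measure Ω) [IsProbabilityMeasure μ]
    {m n d : ℕ}
    (X : Ω → Fin m → ℝ) (hX : Measurable X)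
    (T : Ω → Bool) (hT : Measurable T)
    (Y : Bool → Ω → Fin d → ℝ) (hY : ∀ t, Measurable (Y t))
    (hYint : ∀ t, Integrable (Y t) μ)
    (B : Ω → Fin n → ℝ) (hB : Measurable B)
    (F : Bool → (Fin n → ℝ) → Fin d → ℝ) (hF : ∀ t, Measurable (F t))
    (hFint : ∀ t, Integrable (fun ω => F t (B ω)) μ)
    -- `B` is a B-score with outcome-mean functions `F t`
    (hscore₁ : ∀ t, μ[Y t | MeasurableSpace.comap (fun ω => (B ω, X ω)) inferInstance]
        =ᵐ[μ] fun ω => F t (B ω))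
    (hscore₂ : ∀ t, ∀ᵐ ω ∂μ, T ω = t →
        (μ[(fun ω => Y (T ω) ω) | MeasurableSpace.comap B inferInstance]) ω = F t (B ω))
    -- balancing: `T ⟂ B | X`
    (hbal : CondIndepFun (MeasurableSpace.comap X inferInstance) hX.comap_le T B μ) :
    ∀ t : Bool,
      -- `μ_{1−t}(x) = E[F (1−t) (B) | X = x, T = t]` on the positivity region
      (∀ᵐ ω ∂μ, T ω = t →
        (μ[Y (!t) | MeasurableSpace.comap X inferInstance]) ω
          = (μ[(fun ω => F (!t) (B ω)) |
              MeasurableSpace.comap (fun ω => (X ω, T ω)) inferInstance]) ω)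
      ∧
      -- equivalently, `μ_{1−t}(x) = E[F (1−t) (B) | X = x]`
      (μ[Y (!t) | MeasurableSpace.comap X inferInstance]
        =ᵐ[μ] μ[(fun ω => F (!t) (B ω)) | MeasurableSpace.comap X inferInstance]) :=
  counterfactual_mean_balanced_general μ X hX T hT Y B hB F hF hscore₁ hbal
end
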